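/- Let J be a real m×n matrix and L a real p×n matrix satisfying the completeness condition with constant γ > 0, let λ > 0 and F ∈ ℝᵐ, let d solve (JᵀJ + λLᵀL)d = −JᵀF, and set g = JᵀF and M = ‖J‖² + λ‖L‖² (spectral norms). Then ‖g‖ ≤ M‖d‖, and consequently gᵀd ≤ −(γ·min{1, λ}/M²)·‖g‖² (provided M > 0). -/

import Mathlib

open Matrix RealInnerProductSpace

/-- The continuous linear map on Euclidean spaces induced by a real matrix. -/
noncomputable def matCLM {m n : ℕ} (A : Matrix (Fin m) (Fin n) ℝ) :
    EuclideanSpace ℝ (Fin n) →L[ℝ] EuclideanSpace ℝ (Fin m) :=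
  LinearMap.toContinuousLinearMap (Matrix.toEuclideanLin A)

/-! `T = A†A + λB†B` is bounded by `M = ‖A‖² + λ‖B‖²`, since `‖A†A‖ = ‖A‖²`, and it is coercive
with constant `γ·min{1, λ}` by the completeness condition, since `⟪T v, v⟫ = ‖A v‖² + λ‖B v‖²`.
For `T d = -g` the first fact gives `‖g‖ ≤ M‖d‖`, and the second gives
`⟪g, d⟫ = -⟪T d, d⟫ ≤ -γ·min{1, λ}‖d‖² ≤ -(γ·min{1, λ}/M²)‖g‖²`. -/

section RegularizedGram

open ContinuousLinearMap

variable {E F G : Type*}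
  [NormedAddCommGroup E] [InnerProductSpace ℝ E] [CompleteSpace E]
  [NormedAddCommGroup F] [InnerProductSpace ℝ F] [CompleteSpace F]
  [NormedAddCommGroup G] [InnerProductSpace ℝ G] [CompleteSpace G]

noncomputable def regularizedGram (A : E →L[ℝ] F) (B : E →L[ℝ] G) (lam : ℝ) : E →L[ℝ] E :=
  adjoint A ∘L A + lam • (adjoint B ∘L B)

variable (A : E →L[ℝ] F) (B : E →L[ℝ] G) {lam : ℝ}

theorem norm_regularizedGram_le (hlam : 0 ≤ lam) :
    ‖regularizedGram A B lam‖ ≤ ‖A‖ ^ 2 + lam * ‖B‖ ^ 2 := by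
  calc ‖regularizedGram A B lam‖ ≤ ‖adjoint A ∘L A‖ + ‖lam • (adjoint B ∘L B)‖ := norm_add_le _ _
    _ = ‖A‖ ^ 2 + lam * ‖B‖ ^ 2 := by
      rw [norm_smul, norm_adjoint_comp_self, norm_adjoint_comp_self, Real.norm_of_nonneg hlam]
      ring

theorem inner_regularizedGram_apply_self (v : E) :
    ⟪regularizedGram A B lam v, v⟫ = ‖A v‖ ^ 2 + lam * ‖B v‖ ^ 2 := by
  simp only [regularizedGram, _root_.add_apply, _root_.smul_apply, ContinuousLinearMap.comp_apply,
    inner_add_left, real_inner_smul_left, adjoint_inner_left, real_inner_self_eq_norm_sq]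

theorem mul_min_mul_norm_sq_le_inner_regularizedGram {γ : ℝ}
    (hcomp : ∀ v, γ * ‖v‖ ^ 2 ≤ ‖A v‖ ^ 2 + ‖B v‖ ^ 2) (hlam : 0 ≤ lam) (v : E) :
    γ * min 1 lam * ‖v‖ ^ 2 ≤ ⟪regularizedGram A B lam v, v⟫ := by
  have hmin : 0 ≤ min 1 lam := le_min zero_le_one hlam
  have hA : min 1 lam * ‖A v‖ ^ 2 ≤ ‖A v‖ ^ 2 :=
    mul_le_of_le_one_left (sq_nonneg _) (min_le_left _ _)
  have hB : min 1 lam * ‖B v‖ ^ 2 ≤ lam * ‖B v‖ ^ 2 :=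
    mul_le_mul_of_nonneg_right (min_le_right _ _) (sq_nonneg _)
  rw [inner_regularizedGram_apply_self]
  nlinarith [mul_le_mul_of_nonneg_left (hcomp v) hmin]

end RegularizedGram

section CoerciveEquation

variable {E : Type*} [NormedAddCommGroup E] [InnerProductSpace ℝ E]
  {T : E →L[ℝ] E} {M : ℝ} {d g : E}

theorem norm_le_mul_norm_of_apply_eq_neg (hT : ‖T‖ ≤ M) (hd : T d = -g) : ‖g‖ ≤ M * ‖d‖ := by
  rw [← norm_neg g, ← hd]
  exact T.le_of_opNorm_le hT d

theorem inner_le_neg_div_sq_mul_norm_sq_of_apply_eq_neg {c : ℝ} (hc : 0 ≤ c)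
    (hcoer : ∀ v, c * ‖v‖ ^ 2 ≤ ⟪T v, v⟫) (hT : ‖T‖ ≤ M) (hM : 0 < M) (hd : T d = -g) :
    ⟪g, d⟫ ≤ -(c / M ^ 2) * ‖g‖ ^ 2 := by
  have hgd : ‖g‖ ^ 2 ≤ M ^ 2 * ‖d‖ ^ 2 := by
    rw [← mul_pow]
    exact pow_le_pow_left₀ (norm_nonneg g) (norm_le_mul_norm_of_apply_eq_neg hT hd) 2
  have hinner : ⟪g, d⟫ = -⟪T d, d⟫ := by rw [hd, inner_neg_left, neg_neg]
  calc ⟪g, d⟫ ≤ -(c * ‖d‖ ^ 2) := by rw [hinner]; exact neg_le_neg (hcoer d)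
    _ ≤ -(c / M ^ 2) * ‖g‖ ^ 2 := by
      rw [neg_mul, neg_le_neg_iff, div_mul_eq_mul_div, div_le_iff₀ (by positivity)]
      nlinarith [mul_le_mul_of_nonneg_left hgd hc]

end CoerciveEquation

section MatCLM

variable {m n p : ℕ}

theorem matCLM_mul (A : Matrix (Fin m) (Fin n) ℝ) (B : Matrix (Fin n) (Fin p) ℝ) :
    matCLM (A * B) = matCLM A ∘L matCLM B := by
  ext1 v
  simp [matCLM, Matrix.toLpLin_apply, Matrix.mulVec_mulVec]

theorem matCLM_add (A B : Matrix (Fin m) (Fin n) ℝ) : matCLM (A + B) = matCLM A + matCLM B := by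
  ext1 v
  simp [matCLM]

theorem matCLM_smul (c : ℝ) (A : Matrix (Fin m) (Fin n) ℝ) : matCLM (c • A) = c • matCLM A := by
  ext1 v
  simp [matCLM]

theorem matCLM_transpose (A : Matrix (Fin m) (Fin n) ℝ) :
    matCLM Aᵀ = ContinuousLinearMap.adjoint (matCLM A) := by
  rw [← conjTranspose_eq_transpose_of_trivial, matCLM, toEuclideanLin_conjTranspose_eq_adjoint,
    LinearMap.adjoint_toContinuousLinearMap]
  rfl

theorem matCLM_regularizedGram (J : Matrix (Fin m) (Fin n) ℝ) (L : Matrix (Fin p) (Fin n) ℝ)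
    (lam : ℝ) : matCLM (Jᵀ * J + lam • (Lᵀ * L)) = regularizedGram (matCLM J) (matCLM L) lam := by
  rw [matCLM_add, matCLM_smul, matCLM_mul, matCLM_mul, matCLM_transpose, matCLM_transpose,
    regularizedGram]

end MatCLM

/-- under the completeness condition with constant `γ > 0`, if `d` solves
`(JᵀJ + λLᵀL)d = −JᵀF`, `g = JᵀF` and `M = ‖J‖² + λ‖L‖²` (spectral norms), then
`‖g‖ ≤ M‖d‖`, and if `M > 0` then `gᵀd ≤ −(γ·min{1,λ}/M²)·‖g‖²`. -/
theorem lmmss_gradient_bound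
    (m n p : ℕ) (J : Matrix (Fin m) (Fin n) ℝ) (L : Matrix (Fin p) (Fin n) ℝ)
    (γ : ℝ) (hγ : 0 < γ)
    (hcomp : ∀ v : EuclideanSpace ℝ (Fin n),
      ‖matCLM J v‖ ^ 2 + ‖matCLM L v‖ ^ 2 ≥ γ * ‖v‖ ^ 2)
    (lam : ℝ) (hlam : 0 < lam) (F : EuclideanSpace ℝ (Fin m))
    (d : EuclideanSpace ℝ (Fin n))
    (hd : matCLM (Jᵀ * J + lam • (Lᵀ * L)) d = -(matCLM Jᵀ F)) :
    ‖matCLM Jᵀ F‖ ≤ (‖matCLM J‖ ^ 2 + lam * ‖matCLM L‖ ^ 2) * ‖d‖ ∧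
      (0 < ‖matCLM J‖ ^ 2 + lam * ‖matCLM L‖ ^ 2 →
        ⟪matCLM Jᵀ F, d⟫ ≤
          -(γ * min 1 lam / (‖matCLM J‖ ^ 2 + lam * ‖matCLM L‖ ^ 2) ^ 2) *
            ‖matCLM Jᵀ F‖ ^ 2) := by
  rw [matCLM_regularizedGram] at hd
  have hbound := norm_regularizedGram_le (matCLM J) (matCLM L) hlam.le
  have hcoer := mul_min_mul_norm_sq_le_inner_regularizedGram _ _ hcomp hlam.le
  have hc : 0 ≤ γ * min 1 lam := mul_nonneg hγ.le (le_min zero_le_one hlam.le)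
  exact ⟨norm_le_mul_norm_of_apply_eq_neg hbound hd,
    fun hM => inner_le_neg_div_sq_mul_norm_sq_of_apply_eq_neg hc hcoer hbound hM hd⟩
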